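/- Let n ≥ 1 and φ ∈ [−π/2, π/2]. Then A_n(iφ) is a real number (its imaginary part vanishes) and B_n(iφ) is purely imaginary (its real part vanishes). -/
import Mathlib


open MeasureTheory Topology Filter Set

noncomputable section

/-- `sinh(ζ)/ζ`, extended by `1` at `ζ = 0`. -/
def sinhc (z : ℂ) : ℂ := if z = 0 then 1 else Complex.sinh z / z

/-- `A_n(w) = ∫_ℝ (sinh(λ+w)/(λ+w))^{1/2} cosh(λ+w) (cosh λ)^{−n−3/2} dλ`
(principal branch powers). -/
def An (n : ℕ) (w : ℂ) : ℂ :=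
  ∫ l : ℝ, sinhc (l + w) ^ ((1 : ℂ) / 2) * Complex.cosh (l + w) *
    Complex.cosh (l : ℂ) ^ (-(n : ℂ) - 3 / 2)

/-- `B_n(w) = ∫_ℝ (λ+w)(sinh(λ+w)/(λ+w))^{3/2} (cosh λ)^{−n−3/2} dλ`
(principal branch powers). -/
def Bn (n : ℕ) (w : ℂ) : ℂ :=
  ∫ l : ℝ, ((l : ℂ) + w) * sinhc (l + w) ^ ((3 : ℂ) / 2) *
    Complex.cosh (l : ℂ) ^ (-(n : ℂ) - 3 / 2)

/-- `sinh λ / λ` for real `λ`, extended by `1` at `λ = 0`. -/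
def shc (l : ℝ) : ℝ := if l = 0 then 1 else Real.sinh l / l

open Complex in
lemma sinhc_neg_conj (z : ℂ) :
    sinhc (-(starRingEnd ℂ z)) = starRingEnd ℂ (sinhc z) := by
  unfold sinhc
  by_cases hz : z = 0
  · simp [hz]
  · rw [if_neg (by simpa using hz), if_neg hz]
    rw [Complex.sinh_neg, map_div₀, ← Complex.sinh_conj]
    ring

lemma re_sinhc_nonneg (l φ : ℝ) (hφ : φ ∈ Set.Icc (-(Real.pi / 2)) (Real.pi / 2)) :
    0 ≤ (sinhc ((l : ℂ) + Complex.I * φ)).re := by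
  obtain ⟨h1, h2⟩ := hφ
  set z : ℂ := (l : ℂ) + Complex.I * φ with hz
  have hre : z.re = l := by simp [hz]
  have him : z.im = φ := by simp [hz]
  have hs : Complex.sinh z = ((Real.sinh l * Real.cos φ : ℝ) : ℂ)
      + ((Real.cosh l * Real.sin φ : ℝ) : ℂ) * Complex.I := by
    rw [hz, show (l : ℂ) + Complex.I * φ = (l : ℂ) + (φ : ℂ) * Complex.I by ring,
      Complex.sinh_add, Complex.sinh_mul_I, Complex.cosh_mul_I,
      ← Complex.ofReal_sinh, ← Complex.ofReal_cosh, ← Complex.ofReal_sin, ← Complex.ofReal_cos]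
    push_cast; ring
  have hsre : (Complex.sinh z).re = Real.sinh l * Real.cos φ := by
    rw [hs]
    simp [-Complex.ofReal_sinh, -Complex.ofReal_cosh, -Complex.ofReal_sin, -Complex.ofReal_cos]
  have hsim : (Complex.sinh z).im = Real.cosh l * Real.sin φ := by
    rw [hs]
    simp [-Complex.ofReal_sinh, -Complex.ofReal_cosh, -Complex.ofReal_sin, -Complex.ofReal_cos]
  unfold sinhc
  by_cases h0 : z = 0
  · simp [h0]
  · rw [if_neg h0, Complex.div_re, hsre, hsim, hre, him]
    have hsl : 0 ≤ Real.sinh l * l := by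
      rcases le_or_gt 0 l with h | h
      · exact mul_nonneg (Real.sinh_nonneg_iff.mpr h) h
      · nlinarith [Real.sinh_neg_iff.mpr h]
    have hcφ : 0 ≤ Real.cos φ := Real.cos_nonneg_of_mem_Icc ⟨h1, h2⟩
    have hsφ : 0 ≤ Real.sin φ * φ := by
      rcases le_or_gt 0 φ with h | h
      · exact mul_nonneg (Real.sin_nonneg_of_nonneg_of_le_pi h
          (le_trans h2 (by linarith [Real.pi_pos]))) h
      · have : 0 ≤ Real.sin (-φ) := Real.sin_nonneg_of_nonneg_of_le_pi (by linarith)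
          (by linarith [Real.pi_pos])
        rw [Real.sin_neg] at this
        nlinarith
    have hch : 0 ≤ Real.cosh l := (Real.cosh_pos l).le
    apply add_nonneg <;> apply div_nonneg
    · calc (0:ℝ) ≤ (Real.sinh l * l) * Real.cos φ := mul_nonneg hsl hcφ
        _ = Real.sinh l * Real.cos φ * l := by ring
    · exact Complex.normSq_nonneg z
    · calc (0:ℝ) ≤ Real.cosh l * (Real.sin φ * φ) := mul_nonneg hch hsφ
        _ = Real.cosh l * Real.sin φ * φ := by ring
    · exact Complex.normSq_nonneg z

lemma arg_sinhc_ne_pi (l φ : ℝ) (hφ : φ ∈ Set.Icc (-(Real.pi / 2)) (Real.pi / 2)) :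
    (sinhc ((l : ℂ) + Complex.I * φ)).arg ≠ Real.pi := by
  intro h
  rw [Complex.arg_eq_pi_iff] at h
  exact absurd (re_sinhc_nonneg l φ hφ) (not_le.mpr h.1)

lemma conj_sinhc_cpow (l φ : ℝ) (hφ : φ ∈ Set.Icc (-(Real.pi / 2)) (Real.pi / 2)) (c : ℂ)
    (hc : starRingEnd ℂ c = c) :
    starRingEnd ℂ (sinhc ((l : ℂ) + Complex.I * φ) ^ c)
      = sinhc (((-l : ℝ) : ℂ) + Complex.I * φ) ^ c := by
  have key : -(starRingEnd ℂ ((l : ℂ) + Complex.I * φ)) = ((-l : ℝ) : ℂ) + Complex.I * φ := by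
    simp [Complex.conj_I]; ring
  rw [← key, sinhc_neg_conj, Complex.conj_cpow _ _ (arg_sinhc_ne_pi l φ hφ), hc]

lemma conj_cosh_cpow (l : ℝ) (n : ℕ) :
    starRingEnd ℂ (Complex.cosh (l : ℂ) ^ (-(n : ℂ) - 3 / 2))
      = Complex.cosh (l : ℂ) ^ (-(n : ℂ) - 3 / 2) := by
  have h1 : Complex.cosh (l : ℂ) = ((Real.cosh l : ℝ) : ℂ) := (Complex.ofReal_cosh l).symm
  have h2 : (-(n : ℂ) - 3 / 2) = (((-(n : ℝ) - 3 / 2 : ℝ)) : ℂ) := by push_cast; ring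
  rw [h1, h2, ← Complex.ofReal_cpow (Real.cosh_pos l).le, Complex.conj_ofReal]

theorem stmt13 (n : ℕ) (hn : 1 ≤ n) (φ : ℝ)
    (hφ : φ ∈ Set.Icc (-(Real.pi / 2)) (Real.pi / 2)) :
    (An n (Complex.I * φ)).im = 0 ∧ (Bn n (Complex.I * φ)).re = 0 := by
  have hconjz : ∀ l : ℝ, starRingEnd ℂ ((l : ℂ) + Complex.I * φ)
      = -(((-l : ℝ) : ℂ) + Complex.I * φ) := by
    intro l; simp [Complex.conj_I]; ring
  have hcoshneg : ∀ l : ℝ, Complex.cosh (((-l : ℝ)) : ℂ) = Complex.cosh (l : ℂ) := by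
    intro l; push_cast; rw [Complex.cosh_neg]
  constructor
  · rw [← Complex.conj_eq_iff_im]
    unfold An
    rw [← integral_conj]
    rw [show (∫ l : ℝ, sinhc ((l : ℂ) + Complex.I * φ) ^ ((1:ℂ)/2) *
        Complex.cosh ((l : ℂ) + Complex.I * φ) * Complex.cosh (l : ℂ) ^ (-(n : ℂ) - 3 / 2))
        = ∫ l : ℝ, sinhc (((-l : ℝ) : ℂ) + Complex.I * φ) ^ ((1:ℂ)/2) *
        Complex.cosh (((-l : ℝ) : ℂ) + Complex.I * φ) *
        Complex.cosh (((-l : ℝ)) : ℂ) ^ (-(n : ℂ) - 3 / 2) from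
      (MeasureTheory.integral_neg_eq_self (fun l : ℝ => sinhc ((l : ℂ) + Complex.I * φ) ^ ((1:ℂ)/2) *
        Complex.cosh ((l : ℂ) + Complex.I * φ) *
        Complex.cosh ((l : ℝ) : ℂ) ^ (-(n : ℂ) - 3 / 2)) volume).symm]
    congr 1
    funext l
    rw [map_mul, map_mul]
    rw [conj_sinhc_cpow l φ hφ ((1:ℂ)/2) (by simp [map_ofNat]), ← Complex.cosh_conj, hconjz l,
      Complex.cosh_neg, conj_cosh_cpow, hcoshneg]
  · have key : starRingEnd ℂ (Bn n (Complex.I * φ)) = -(Bn n (Complex.I * φ)) := by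
      unfold Bn
      rw [← integral_conj]
      rw [show (∫ l : ℝ, ((l : ℂ) + Complex.I * φ) *
          sinhc ((l : ℂ) + Complex.I * φ) ^ ((3:ℂ)/2) *
          Complex.cosh (l : ℂ) ^ (-(n : ℂ) - 3 / 2))
          = ∫ l : ℝ, (((-l : ℝ) : ℂ) + Complex.I * φ) *
          sinhc (((-l : ℝ) : ℂ) + Complex.I * φ) ^ ((3:ℂ)/2) *
          Complex.cosh (((-l : ℝ)) : ℂ) ^ (-(n : ℂ) - 3 / 2) from
        (MeasureTheory.integral_neg_eq_self (fun l : ℝ => ((l : ℂ) + Complex.I * φ) *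
          sinhc ((l : ℂ) + Complex.I * φ) ^ ((3:ℂ)/2) *
          Complex.cosh ((l : ℝ) : ℂ) ^ (-(n : ℂ) - 3 / 2)) volume).symm]
      rw [← integral_neg]
      congr 1
      funext l
      rw [map_mul, map_mul]
      rw [conj_sinhc_cpow l φ hφ ((3:ℂ)/2) (by simp [map_ofNat]), hconjz l, conj_cosh_cpow, hcoshneg]
      ring
    have := congrArg Complex.re key
    rw [Complex.conj_re, Complex.neg_re] at this
    linarith
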